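/- Let Y ∈ ℝ^{n×d}, x* ∈ ℝ^n, β > 0, and let D_1, …, D_ℓ be the ReLU sign-pattern matrices of Y. Suppose (w_i*, z_i*)_{i=1}^ℓ is an optimal solution of the convex dual program attaining value d*, such that for each i at most one of w_i*, z_i* is nonzero. Define primal weights as follows: for each i with w_i* ≠ 0 take the neuron (u_i, v_i) = (w_i*/√‖w_i*‖_2, √‖w_i*‖_2), and for each i with z_i* ≠ 0 take the neuron (u_i, v_i) = (z_i*/√‖z_i*‖_2, −√‖z_i*‖_2). Then these primal weights are feasible for the primal training problem with m = ℓ neurons (padding unused neurons with zeros) and attain primal objective value equal to d*; in particular, if m ≥ m* + 1 (with m* as in the strong duality theorem) they are optimal for the primal problem. -/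

import Mathlib

/-!
Rescaling a dual vector `w ≠ 0` to the neuron `(w / √‖w‖, √‖w‖)` balances the two layers, so the
weight-decay term of the neuron is `‖w‖ + ‖w‖ = 2‖w‖`, matching the group-norm penalty of the dual.
Dual feasibility `(2Dᵢ − I) Y wᵢ ≥ 0` says that `Dᵢ` is exactly the activation pattern of `Y wᵢ`, so the
neuron outputs `(Y wᵢ)₊ = Dᵢ Y wᵢ`. Hence the primal objective of the reconstructed network equals
the dual objective of `(w, z)`, which is `d*`; the optimality claim is then strong duality.
-/

open Matrix Finset

noncomputable section

/-- Euclidean (ℓ2) norm of a vector in ℝ^k. -/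
def l2 {k : ℕ} (x : Fin k → ℝ) : ℝ := Real.sqrt (∑ i, (x i) ^ 2)

/-- Componentwise ReLU. -/
def relu {k : ℕ} (x : Fin k → ℝ) : Fin k → ℝ := fun i => max (x i) 0

/-- The set of ReLU sign-pattern matrices of `Y`: diagonal 0/1 matrices
`Diag(1_{Yu ≥ 0})` as `u` ranges over the closed unit ball. -/
def signPatterns {n d : ℕ} (Y : Matrix (Fin n) (Fin d) ℝ) :
    Set (Matrix (Fin n) (Fin n) ℝ) :=
  { M | ∃ u : Fin d → ℝ, l2 u ≤ 1 ∧
      M = Matrix.diagonal (fun i => if 0 ≤ Y.mulVec u i then (1 : ℝ) else 0) }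

/-- Primal (non-convex) training objective with `m` neurons. -/
def primalObj {n d : ℕ} (Y : Matrix (Fin n) (Fin d) ℝ) (xs : Fin n → ℝ) (β : ℝ)
    (m : ℕ) (u : Fin m → Fin d → ℝ) (v : Fin m → ℝ) : ℝ :=
  (1 / 2) * l2 ((∑ j, v j • relu (Y.mulVec (u j))) - xs) ^ 2
    + (β / 2) * ∑ j, (l2 (u j) ^ 2 + |v j| ^ 2)

/-- Optimal value of the primal training problem with `m` neurons. -/
def pStar {n d : ℕ} (Y : Matrix (Fin n) (Fin d) ℝ) (xs : Fin n → ℝ) (β : ℝ)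
    (m : ℕ) : ℝ :=
  sInf { c | ∃ u : Fin m → Fin d → ℝ, ∃ v : Fin m → ℝ, c = primalObj Y xs β m u v }

/-- Dual feasibility: `(2 Dᵢ − I) Y wᵢ ≥ 0` componentwise for every `i`. -/
def dualFeasible {n d ℓ : ℕ} (Y : Matrix (Fin n) (Fin d) ℝ)
    (D : Fin ℓ → Matrix (Fin n) (Fin n) ℝ) (w : Fin ℓ → Fin d → ℝ) : Prop :=
  ∀ i j, 0 ≤ ((2 • D i - 1).mulVec (Y.mulVec (w i))) j

/-- Convex dual objective. -/
def dualObj {n d ℓ : ℕ} (Y : Matrix (Fin n) (Fin d) ℝ) (xs : Fin n → ℝ) (β : ℝ)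
    (D : Fin ℓ → Matrix (Fin n) (Fin n) ℝ) (w z : Fin ℓ → Fin d → ℝ) : ℝ :=
  (1 / 2) * l2 ((∑ i, (D i).mulVec (Y.mulVec (w i - z i))) - xs) ^ 2
    + β * ∑ i, (l2 (w i) + l2 (z i))

/-- Optimal value of the convex dual program. -/
def dStar {n d ℓ : ℕ} (Y : Matrix (Fin n) (Fin d) ℝ) (xs : Fin n → ℝ) (β : ℝ)
    (D : Fin ℓ → Matrix (Fin n) (Fin n) ℝ) : ℝ :=
  sInf { c | ∃ w z : Fin ℓ → Fin d → ℝ,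
    dualFeasible Y D w ∧ dualFeasible Y D z ∧ c = dualObj Y xs β D w z }

end

open Classical in
/-- Reconstructed first-layer weights from an optimal dual solution. -/
noncomputable def recU {d ℓ : ℕ} (w z : Fin ℓ → Fin d → ℝ) : Fin ℓ → Fin d → ℝ :=
  fun i =>
    if w i ≠ 0 then (Real.sqrt (l2 (w i)))⁻¹ • w i
    else if z i ≠ 0 then (Real.sqrt (l2 (z i)))⁻¹ • z i
    else 0

open Classical in
/-- Reconstructed second-layer weights from an optimal dual solution. -/
noncomputable def recV {d ℓ : ℕ} (w z : Fin ℓ → Fin d → ℝ) : Fin ℓ → ℝ :=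
  fun i =>
    if w i ≠ 0 then Real.sqrt (l2 (w i))
    else if z i ≠ 0 then -Real.sqrt (l2 (z i))
    else 0

lemma l2_nonneg {k : ℕ} (x : Fin k → ℝ) : 0 ≤ l2 x := Real.sqrt_nonneg _

@[simp]
lemma l2_zero {k : ℕ} : l2 (0 : Fin k → ℝ) = 0 := by simp [l2]

lemma l2_smul {k : ℕ} (c : ℝ) (x : Fin k → ℝ) : l2 (c • x) = |c| * l2 x := by
  simp only [l2, Pi.smul_apply, smul_eq_mul, mul_pow, ← Finset.mul_sum]
  rw [Real.sqrt_mul (sq_nonneg c), Real.sqrt_sq_eq_abs]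

lemma l2_inv_sqrt_smul_sq_add_sqrt_sq {k : ℕ} (x : Fin k → ℝ) :
    l2 ((√(l2 x))⁻¹ • x) ^ 2 + √(l2 x) ^ 2 = 2 * l2 x := by
  rw [l2_smul, mul_pow, sq_abs, inv_pow, Real.sq_sqrt (l2_nonneg x)]
  rcases eq_or_ne (l2 x) 0 with h | h
  · simp [h]
  · field_simp
    ring

@[simp]
lemma relu_zero {k : ℕ} : relu (0 : Fin k → ℝ) = 0 := by
  funext i
  simp [relu]

lemma relu_smul {k : ℕ} {c : ℝ} (hc : 0 ≤ c) (x : Fin k → ℝ) :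
    relu (c • x) = c • relu x := by
  funext i
  simp only [relu, Pi.smul_apply, smul_eq_mul, mul_max_of_nonneg _ _ hc, mul_zero]

lemma sqrt_l2_smul_relu_mulVec_inv_smul {n d : ℕ} (Y : Matrix (Fin n) (Fin d) ℝ)
    (x : Fin d → ℝ) : √(l2 x) • relu (Y *ᵥ ((√(l2 x))⁻¹ • x)) = relu (Y *ᵥ x) := by
  rcases eq_or_ne x 0 with rfl | hx
  · simp
  have hs : √(l2 x) ≠ 0 := by
    rw [Real.sqrt_ne_zero (l2_nonneg x), l2, Real.sqrt_ne_zero']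
    obtain ⟨i, hi⟩ := Function.ne_iff.1 hx
    exact Finset.sum_pos' (fun j _ => sq_nonneg _) ⟨i, Finset.mem_univ i, sq_pos_of_ne_zero hi⟩
  rw [mulVec_smul, relu_smul (inv_nonneg.2 (Real.sqrt_nonneg _)), smul_smul,
    mul_inv_cancel₀ hs, one_smul]

lemma relu_eq_mulVec_of_mem_signPatterns {n d : ℕ} {Y : Matrix (Fin n) (Fin d) ℝ}
    {M : Matrix (Fin n) (Fin n) ℝ} (hM : M ∈ signPatterns Y) {x : Fin n → ℝ}
    (hx : ∀ j, 0 ≤ ((2 • M - 1) *ᵥ x) j) : relu x = M *ᵥ x := by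
  obtain ⟨u, -, rfl⟩ := hM
  funext j
  have hj := hx j
  simp only [two_smul, sub_mulVec, add_mulVec, one_mulVec, mulVec_diagonal, Pi.sub_apply,
    Pi.add_apply] at hj
  simp only [relu, mulVec_diagonal]
  split_ifs at hj ⊢ <;> simp only [one_mul, zero_mul] at hj ⊢
  · exact max_eq_left (by linarith)
  · exact max_eq_right (by linarith)

section Reconstruction

variable {n d ℓ : ℕ} {w z : Fin ℓ → Fin d → ℝ} {i : Fin ℓ}

lemma recU_of_left_eq_zero (h : w i = 0) : recU w z i = (√(l2 (z i)))⁻¹ • z i := by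
  rcases eq_or_ne (z i) 0 with hz | hz <;> simp [recU, h, hz]

lemma recV_of_left_eq_zero (h : w i = 0) : recV w z i = -√(l2 (z i)) := by
  rcases eq_or_ne (z i) 0 with hz | hz <;> simp [recV, h, hz]

lemma recU_of_right_eq_zero (h : z i = 0) : recU w z i = (√(l2 (w i)))⁻¹ • w i := by
  rcases eq_or_ne (w i) 0 with hw | hw <;> simp [recU, h, hw]

lemma recV_of_right_eq_zero (h : z i = 0) : recV w z i = √(l2 (w i)) := by
  rcases eq_or_ne (w i) 0 with hw | hw <;> simp [recV, h, hw]

lemma l2_recU_sq_add_abs_recV_sq (hone : w i = 0 ∨ z i = 0) :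
    l2 (recU w z i) ^ 2 + |recV w z i| ^ 2 = 2 * (l2 (w i) + l2 (z i)) := by
  rcases hone with h | h
  · rw [recU_of_left_eq_zero h, recV_of_left_eq_zero h, sq_abs, neg_sq,
      l2_inv_sqrt_smul_sq_add_sqrt_sq, h, l2_zero, zero_add]
  · rw [recU_of_right_eq_zero h, recV_of_right_eq_zero h, sq_abs,
      l2_inv_sqrt_smul_sq_add_sqrt_sq, h, l2_zero, add_zero]

variable {Y : Matrix (Fin n) (Fin d) ℝ} {D : Fin ℓ → Matrix (Fin n) (Fin n) ℝ}

lemma relu_mulVec_of_dualFeasible (hD : ∀ i, D i ∈ signPatterns Y) (hw : dualFeasible Y D w)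
    (i : Fin ℓ) : relu (Y *ᵥ w i) = D i *ᵥ (Y *ᵥ w i) :=
  relu_eq_mulVec_of_mem_signPatterns (hD i) (hw i)

lemma recV_smul_relu_mulVec_recU (hD : ∀ i, D i ∈ signPatterns Y) (hw : dualFeasible Y D w)
    (hz : dualFeasible Y D z) (hone : w i = 0 ∨ z i = 0) :
    recV w z i • relu (Y *ᵥ recU w z i) = D i *ᵥ (Y *ᵥ (w i - z i)) := by
  rcases hone with h | h
  · rw [recU_of_left_eq_zero h, recV_of_left_eq_zero h, neg_smul,
      sqrt_l2_smul_relu_mulVec_inv_smul, relu_mulVec_of_dualFeasible hD hz, h, zero_sub,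
      mulVec_neg, mulVec_neg]
  · rw [recU_of_right_eq_zero h, recV_of_right_eq_zero h,
      sqrt_l2_smul_relu_mulVec_inv_smul, relu_mulVec_of_dualFeasible hD hw, h, sub_zero]

lemma primalObj_recU_recV (xs : Fin n → ℝ) (β : ℝ) (hD : ∀ i, D i ∈ signPatterns Y)
    (hw : dualFeasible Y D w) (hz : dualFeasible Y D z) (hone : ∀ i, w i = 0 ∨ z i = 0) :
    primalObj Y xs β ℓ (recU w z) (recV w z) = dualObj Y xs β D w z := by
  unfold primalObj dualObj
  rw [Finset.sum_congr rfl fun i _ => recV_smul_relu_mulVec_recU hD hw hz (hone i),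
    Finset.sum_congr rfl fun i _ => l2_recU_sq_add_abs_recV_sq (hone i), ← Finset.mul_sum]
  ring

end Reconstruction

theorem primal_reconstruction_general {n d ℓ : ℕ} (Y : Matrix (Fin n) (Fin d) ℝ)
    (xs : Fin n → ℝ) (β : ℝ)
    (D : Fin ℓ → Matrix (Fin n) (Fin n) ℝ)
    (hrange : Set.range D = signPatterns Y)
    (w z : Fin ℓ → Fin d → ℝ)
    (hw : dualFeasible Y D w) (hz : dualFeasible Y D z)
    (hopt : dualObj Y xs β D w z = dStar Y xs β D)
    (hone : ∀ i, w i = 0 ∨ z i = 0) :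
    primalObj Y xs β ℓ (recU w z) (recV w z) = dStar Y xs β D ∧
    ∀ mstar : ℕ, mstar ≤ n →
      (∀ m ≥ mstar + 1, pStar Y xs β m = dStar Y xs β D) →
      mstar + 1 ≤ ℓ →
      primalObj Y xs β ℓ (recU w z) (recV w z) = pStar Y xs β ℓ := by
  have hD : ∀ i, D i ∈ signPatterns Y := fun i => hrange ▸ Set.mem_range_self i
  have hprimal : primalObj Y xs β ℓ (recU w z) (recV w z) = dStar Y xs β D :=
    (primalObj_recU_recV xs β hD hw hz hone).trans hopt
  exact ⟨hprimal, fun _ _ hstrong hℓ => hprimal.trans (hstrong ℓ hℓ).symm⟩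

/-- **Primal weight reconstruction.** If `(wᵢ*, zᵢ*)` is an optimal
dual solution with at most one of `wᵢ*, zᵢ*` nonzero for each `i`, then the
reconstructed primal weights (with `m = ℓ` neurons, unused neurons set to zero)
attain primal objective value `d*`; in particular they are optimal for the primal
problem whenever `ℓ ≥ m* + 1` for an `m*` as in the strong duality theorem. -/
theorem primal_reconstruction {n d ℓ : ℕ} (Y : Matrix (Fin n) (Fin d) ℝ)
    (xs : Fin n → ℝ) (β : ℝ) (hβ : 0 < β)
    (D : Fin ℓ → Matrix (Fin n) (Fin n) ℝ)
    (hinj : Function.Injective D) (hrange : Set.range D = signPatterns Y)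
    (w z : Fin ℓ → Fin d → ℝ)
    (hw : dualFeasible Y D w) (hz : dualFeasible Y D z)
    (hopt : dualObj Y xs β D w z = dStar Y xs β D)
    (hone : ∀ i, w i = 0 ∨ z i = 0) :
    primalObj Y xs β ℓ (recU w z) (recV w z) = dStar Y xs β D ∧
    ∀ mstar : ℕ, mstar ≤ n →
      (∀ m ≥ mstar + 1, pStar Y xs β m = dStar Y xs β D) →
      mstar + 1 ≤ ℓ →
      primalObj Y xs β ℓ (recU w z) (recV w z) = pStar Y xs β ℓ :=
  primal_reconstruction_general Y xs β D hrange w z hw hz hopt hone
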